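/- arXiv:2506.06559 — 5 statements merged into one kernel-verified Lean document; each statement's English description precedes it below -/
import Mathlib

section
/- Extra disjoint path from a double connection (Lemma 4.19). Let x ∈ ℤ^d, W ⊆ ℤ^d, let E be a finite nonempty set of edges, and let z ∈ V(E). Then, as an inclusion of events (i.e., for every configuration ω): ({E is occupied} ∘ {x ↔ z}) ∩ {W ⇔ x} ⊆ ({E is occupied} ∘ {x ↔ z} ∘ {x ↔ E}) ∪ ({E is occupied} ∘ {x ↔ z} ∘ {W ↔ x}). -/
/-- The vertex set of the hypercubic lattice `ℤ^d`. -/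
abbrev Vtx (d : ℕ) := Fin d → ℤ

/-- A bond percolation configuration: each (unordered) pair of vertices is
occupied (`true`) or vacant (`false`). -/
abbrev BondConfig (d : ℕ) := Sym2 (Vtx d) → Bool

/-- The Euclidean norm of a point of `ℤ^d`. -/
noncomputable def znorm {d : ℕ} (x : Vtx d) : ℝ :=
  Real.sqrt (∑ i, ((x i : ℝ)) ^ 2)

/-- The edge between `a` and `b` is occupied (an edge requires `a ≠ b`). -/
def occEdge {d : ℕ} (ω : BondConfig d) (a b : Vtx d) : Prop :=
  a ≠ b ∧ ω s(a, b) = true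

/-- `a` and `b` are joined by a path of occupied edges (`a ↔ b`);
`a ↔ a` always holds. -/
def Conn {d : ℕ} (ω : BondConfig d) (a b : Vtx d) : Prop :=
  Relation.ReflTransGen (occEdge ω) a b

/-- The connection event `{a ↔ b}`. -/
def ConnEvent {d : ℕ} (a b : Vtx d) : Set (BondConfig d) :=
  {ω | Conn ω a b}

/-- The event `{A ↔ b}` that some vertex of `A` is connected to `b`. -/
def ConnToSet {d : ℕ} (A : Set (Vtx d)) (b : Vtx d) : Set (BondConfig d) :=
  {ω | ∃ a ∈ A, Conn ω a b}

/-- Disjoint occurrence `A ∘ B` of two events. -/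
def DisjOcc {d : ℕ} (A B : Set (BondConfig d)) : Set (BondConfig d) :=
  {ω | ∃ B₁ B₂ : Set (Sym2 (Vtx d)), Disjoint B₁ B₂ ∧
    (∀ ω' : BondConfig d, (∀ e ∈ B₁, ω' e = ω e) → ω' ∈ A) ∧
    (∀ ω' : BondConfig d, (∀ e ∈ B₂, ω' e = ω e) → ω' ∈ B)}

/-- The event `{W ⇔ u} = ⋃_{w, w' ∈ W} {w ↔ u} ∘ {w' ↔ u}`. -/
def WDouble {d : ℕ} (W : Set (Vtx d)) (u : Vtx d) : Set (BondConfig d) :=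
  ⋃ (w ∈ W) (w' ∈ W), DisjOcc (ConnEvent w u) (ConnEvent w' u)

/-- The event that every edge of the finite edge set `E` is occupied. -/
def occupiedEvent {d : ℕ} (E : Finset (Sym2 (Vtx d))) : Set (BondConfig d) :=
  {ω | ∀ e ∈ E, ω e = true}

/-- `V(E)`: the set of endpoints of the edges of `E`. -/
def edgeVerts {d : ℕ} (E : Finset (Sym2 (Vtx d))) : Set (Vtx d) :=
  {v | ∃ e ∈ E, v ∈ e}

namespace ExtraPath

def wconn {d : ℕ} (A : Set (Sym2 (Vtx d))) (u v : Vtx d) : Prop :=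
  Relation.ReflTransGen (fun a b => a ≠ b ∧ s(a, b) ∈ A) u v

theorem wconn_mono {d : ℕ} {A B : Set (Sym2 (Vtx d))} (h : A ⊆ B) {u v : Vtx d}
    (hw : wconn A u v) : wconn B u v :=
  Relation.ReflTransGen.mono (fun a b hab => ⟨hab.1, h hab.2⟩) _ _ hw

theorem wconn_symm {d : ℕ} {A : Set (Sym2 (Vtx d))} {u v : Vtx d}
    (hw : wconn A u v) : wconn A v u := by
  have hs : Symmetric (fun a b : Vtx d => a ≠ b ∧ s(a, b) ∈ A) := by
    rintro a b ⟨h1, h2⟩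
    exact ⟨h1.symm, by rwa [Sym2.eq_swap]⟩
  exact (@Relation.ReflTransGen.stdSymm _ _ ⟨fun _ _ h => hs h⟩).symm _ _ hw

theorem conn_of_wconn {d : ℕ} {A : Set (Sym2 (Vtx d))} {ω : BondConfig d}
    (hA : ∀ e ∈ A, ω e = true) {u v : Vtx d} (hw : wconn A u v) : Conn ω u v :=
  Relation.ReflTransGen.mono (fun a b hab => ⟨hab.1, hA _ hab.2⟩) _ _ hw

theorem wconn_avoid {d : ℕ} {A S : Set (Sym2 (Vtx d))} {u v : Vtx d}
    (hw : wconn A u v) :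
    wconn (A \ S) u v ∨
      ∃ c d', c ≠ d' ∧ s(c, d') ∈ A ∧ s(c, d') ∈ S ∧ wconn (A \ S) d' v := by
  induction hw using Relation.ReflTransGen.head_induction_on with
  | refl => exact Or.inl Relation.ReflTransGen.refl
  | @head a c h' h ih =>
    rcases ih with ih | ih
    · by_cases hS : s(a, c) ∈ S
      · exact Or.inr ⟨a, c, h'.1, h'.2, hS, ih⟩
      · exact Or.inl (Relation.ReflTransGen.head ⟨h'.1, h'.2, hS⟩ ih)
    · exact Or.inr ih

theorem wconn_shrink {d : ℕ} {A : Set (Sym2 (Vtx d))} {a x : Vtx d}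
    (hw : wconn A a x) :
    ∃ A' : Set (Sym2 (Vtx d)), A' ⊆ A ∧ wconn A' a x ∧
      ∀ c d', s(c, d') ∈ A' → wconn A' d' x := by
  induction hw using Relation.ReflTransGen.head_induction_on with
  | refl => exact ⟨∅, by simp, Relation.ReflTransGen.refl, by simp⟩
  | @head a c h' h ih =>
    obtain ⟨A', hsub, hconn, hend⟩ := ih
    have hA'a : wconn (insert s(a, c) A') a x :=
      Relation.ReflTransGen.head ⟨h'.1, Set.mem_insert _ _⟩
        (wconn_mono (Set.subset_insert _ _) hconn)
    refine ⟨insert s(a, c) A', Set.insert_subset h'.2 hsub, hA'a, ?_⟩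
    intro u v huv
    rcases Set.mem_insert_iff.mp huv with heq | hmem
    · rcases Sym2.eq_iff.mp heq with ⟨hu, hv⟩ | ⟨hu, hv⟩
      · subst hv; exact wconn_mono (Set.subset_insert _ _) hconn
      · subst hv; exact hA'a
    · exact wconn_mono (Set.subset_insert _ _) (hend _ _ hmem)

end ExtraPath

/-- **Extra disjoint path from a double connection** (Lemma 4.19).
If `({E occupied} ∘ {x ↔ z})` occurs together with `{W ⇔ x}`, then one can
extract an extra disjoint connection, either from `x` to `V(E)` or from `W`
to `x`. -/
theorem extra_path_from_double_connection
    {d : ℕ} (x : Vtx d) (W : Set (Vtx d))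
    (E : Finset (Sym2 (Vtx d))) (hE : E.Nonempty)
    (hEnd : ∀ e ∈ E, ¬ e.IsDiag)
    (z : Vtx d) (hz : z ∈ edgeVerts E) :
    DisjOcc (occupiedEvent E) (ConnEvent x z) ∩ WDouble W x ⊆
      DisjOcc (DisjOcc (occupiedEvent E) (ConnEvent x z)) (ConnToSet (edgeVerts E) x) ∪
        DisjOcc (DisjOcc (occupiedEvent E) (ConnEvent x z)) (ConnToSet W x) := by
  classical
  rintro ω ⟨⟨B₁, B₂, hB, hB1, hB2⟩, hWD⟩
  simp only [WDouble, Set.mem_iUnion] at hWD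
  obtain ⟨w, hw, w', hw', C₁, C₂, hC, hC1, hC2⟩ := hWD
  -- basic occupation facts
  have hEocc : ∀ e ∈ E, ω e = true := hB1 ω (fun _ _ => rfl)
  have hEB1 : ∀ e ∈ E, e ∈ B₁ := by
    intro e he
    by_contra hne
    have h := hB1 (fun f => if f ∈ B₁ then ω f else false) (fun f hf => by simp [hf]) e he
    simp [hne] at h
  -- extract occupied witness edge sets
  have extract : ∀ (Bs : Set (Sym2 (Vtx d))) (u v : Vtx d),
      (∀ ω' : BondConfig d, (∀ e ∈ Bs, ω' e = ω e) → ω' ∈ ConnEvent u v) →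
      ExtraPath.wconn {e | e ∈ Bs ∧ ω e = true} u v := by
    intro Bs u v hf
    have h := hf (fun f => if f ∈ Bs then ω f else false) (fun f hf' => by simp [hf'])
    refine Relation.ReflTransGen.mono ?_ _ _ h
    rintro a b ⟨h1, h2⟩
    refine ⟨h1, ?_⟩
    by_cases hm : s(a, b) ∈ Bs
    · exact ⟨hm, by simpa [hm] using h2⟩
    · simp [hm] at h2
  have hPconn := extract B₂ x z hB2
  have hG1 := extract C₁ w x hC1
  have hG2 := extract C₂ w' x hC2
  set Pe : Set (Sym2 (Vtx d)) := {e | e ∈ B₂ ∧ ω e = true} with hPe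
  set G1 : Set (Sym2 (Vtx d)) := {e | e ∈ C₁ ∧ ω e = true} with hG1def
  set G2 : Set (Sym2 (Vtx d)) := {e | e ∈ C₂ ∧ ω e = true} with hG2def
  have hPeE : ∀ e ∈ Pe, e ∉ (↑E : Set (Sym2 (Vtx d))) := by
    intro e he heE
    exact (Set.disjoint_right.mp hB he.1) (hEB1 e heE)
  -- the two connections to x, each from W or from V(E), avoiding E
  have getA : ∀ (G : Set (Sym2 (Vtx d))) (w₀ : Vtx d), w₀ ∈ W →
      ExtraPath.wconn G w₀ x →
      ∃ a, (a ∈ W ∨ a ∈ edgeVerts E) ∧ ExtraPath.wconn (G \ ↑E) a x := by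
    intro G w₀ hw₀ hG
    rcases ExtraPath.wconn_avoid (S := ↑E) hG with h | ⟨c, d', hne, hcA, hcE, h⟩
    · exact ⟨w₀, Or.inl hw₀, h⟩
    · exact ⟨d', Or.inr ⟨s(c, d'), Finset.mem_coe.mp hcE, Sym2.mem_mk_right _ _⟩, h⟩
  obtain ⟨a₁, ha₁, h₁⟩ := getA G1 w hw hG1
  obtain ⟨a₂, ha₂, h₂⟩ := getA G2 w' hw' hG2
  obtain ⟨A₁, hA₁sub, hA₁conn, hA₁end⟩ := ExtraPath.wconn_shrink h₁
  obtain ⟨A₂, hA₂sub, hA₂conn, hA₂end⟩ := ExtraPath.wconn_shrink h₂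
  have hA₁A₂ : Disjoint A₁ A₂ := Set.disjoint_left.mpr (by
    intro e he1 he2
    exact (Set.disjoint_left.mp hC (hA₁sub he1).1.1) (hA₂sub he2).1.1)
  have hA₁E : ∀ e ∈ A₁, e ∉ (↑E : Set (Sym2 (Vtx d))) := fun e he => (hA₁sub he).2
  have hA₂E : ∀ e ∈ A₂, e ∉ (↑E : Set (Sym2 (Vtx d))) := fun e he => (hA₂sub he).2
  have hA₁occ : ∀ e ∈ A₁, ω e = true := fun e he => (hA₁sub he).1.2
  have hA₂occ : ∀ e ∈ A₂, ω e = true := fun e he => (hA₂sub he).1.2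
  -- the key combinatorial construction
  have key : ∃ (P Q : Set (Sym2 (Vtx d))) (a : Vtx d),
      Disjoint P Q ∧ (∀ e ∈ P, ω e = true) ∧ (∀ e ∈ Q, ω e = true) ∧
      (∀ e ∈ P, e ∉ (↑E : Set (Sym2 (Vtx d)))) ∧
      (∀ e ∈ Q, e ∉ (↑E : Set (Sym2 (Vtx d)))) ∧
      ExtraPath.wconn P x z ∧ ExtraPath.wconn Q a x ∧ (a ∈ W ∨ a ∈ edgeVerts E) := by
    rcases ExtraPath.wconn_avoid (S := A₁ ∪ A₂) hPconn with hsp | ⟨c, d', hne, hcP, hcS, htail⟩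
    · refine ⟨Pe \ (A₁ ∪ A₂), A₁, a₁, ?_, ?_, hA₁occ, ?_, hA₁E, hsp, hA₁conn, ha₁⟩
      · exact Set.disjoint_left.mpr fun e he he1 => he.2 (Or.inl he1)
      · exact fun e he => (he.1).2
      · exact fun e he => hPeE e he.1
    · rcases hcS with hcS | hcS
      · refine ⟨A₁ ∪ (Pe \ (A₁ ∪ A₂)), A₂, a₂, ?_, ?_, hA₂occ, ?_, hA₂E, ?_, hA₂conn, ha₂⟩
        · exact Set.disjoint_left.mpr (by
            rintro e (he | he) he2
            · exact Set.disjoint_left.mp hA₁A₂ he he2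
            · exact he.2 (Or.inr he2))
        · rintro e (he | he)
          · exact hA₁occ e he
          · exact he.1.2
        · rintro e (he | he)
          · exact hA₁E e he
          · exact hPeE e he.1
        · exact (ExtraPath.wconn_mono Set.subset_union_left
              (ExtraPath.wconn_symm (hA₁end _ _ hcS))).trans
            (ExtraPath.wconn_mono Set.subset_union_right htail)
      · refine ⟨A₂ ∪ (Pe \ (A₁ ∪ A₂)), A₁, a₁, ?_, ?_, hA₁occ, ?_, hA₁E, ?_, hA₁conn, ha₁⟩
        · exact Set.disjoint_left.mpr (by
            rintro e (he | he) he2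
            · exact Set.disjoint_right.mp hA₁A₂ he he2
            · exact he.2 (Or.inl he2))
        · rintro e (he | he)
          · exact hA₂occ e he
          · exact he.1.2
        · rintro e (he | he)
          · exact hA₂E e he
          · exact hPeE e he.1
        · exact (ExtraPath.wconn_mono Set.subset_union_left
              (ExtraPath.wconn_symm (hA₂end _ _ hcS))).trans
            (ExtraPath.wconn_mono Set.subset_union_right htail)
  -- assemble the conclusion
  obtain ⟨P, Q, a, hPQ, hPocc, hQocc, hPE, hQE, hPxz, hQax, ha⟩ := key
  have hmem : ∀ (T : Set (Vtx d)), a ∈ T →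
      ω ∈ DisjOcc (DisjOcc (occupiedEvent E) (ConnEvent x z)) (ConnToSet T x) := by
    intro T haT
    refine ⟨↑E ∪ P, Q, ?_, ?_, ?_⟩
    · refine Set.disjoint_left.mpr ?_
      rintro e (he | he) heQ
      · exact hQE e heQ he
      · exact Set.disjoint_left.mp hPQ he heQ
    · intro ω' hω'
      refine ⟨↑E, P, ?_, ?_, ?_⟩
      · exact Set.disjoint_left.mpr fun e he heP => hPE e heP he
      · intro ω'' h'' e he
        rw [h'' e (Finset.mem_coe.mpr he), hω' e (Set.mem_union_left _ (Finset.mem_coe.mpr he))]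
        exact hEocc e he
      · intro ω'' h''
        exact ExtraPath.conn_of_wconn
          (fun e he => by rw [h'' e he, hω' e (Set.mem_union_right _ he)]; exact hPocc e he) hPxz
    · intro ω' hω'
      exact ⟨a, haT, ExtraPath.conn_of_wconn
        (fun e he => by rw [hω' e he]; exact hQocc e he) hQax⟩
  rcases ha with h | h
  · exact Set.mem_union_right _ (hmem W h)
  · exact Set.mem_union_left _ (hmem (edgeVerts E) h)
end

section
/- Extra disjoint path from a single connection (Lemma 4.21). Let W ⊆ ℤ^d, y ∈ ℤ^d, and let E be a finite nonempty set of edges. Then, as an inclusion of events (i.e., for every configuration ω): {E is occupied} ∩ {W ↔ y} ⊆ ({E is occupied} ∘ {y ↔ E}) ∪ ({E is occupied} ∘ {W ↔ y}). -/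
/-! Cut an occupied path from `W` to `y` after its last edge in `E`. The remaining piece uses
no edge of `E`, so it occurs disjointly from `{E is occupied}` (witnessed by `E` itself), and it
joins `y` either to an endpoint of that edge or, if the path never meets `E`, to `W`. -/

open Relation

def ConnOff {d : ℕ} (ω : BondConfig d) (E : Finset (Sym2 (Vtx d))) (a b : Vtx d) : Prop :=
  ReflTransGen (fun u v => occEdge ω u v ∧ s(u, v) ∉ E) a b

lemma ConnOff.conn_of_eqOn_compl {d : ℕ} {ω ω' : BondConfig d} {E : Finset (Sym2 (Vtx d))}
    {a b : Vtx d} (hω' : ∀ e ∈ (↑E : Set (Sym2 (Vtx d)))ᶜ, ω' e = ω e)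
    (h : ConnOff ω E a b) : Conn ω' a b :=
  ReflTransGen.mono (fun _ _ ⟨⟨hne, hocc⟩, hnotE⟩ => ⟨hne, (hω' _ hnotE).trans hocc⟩) _ _ h

lemma Conn.connOff_or_exists_edgeVerts {d : ℕ} {ω : BondConfig d}
    (E : Finset (Sym2 (Vtx d))) {a b : Vtx d} (h : Conn ω a b) :
    ConnOff ω E a b ∨ ∃ v ∈ edgeVerts E, ConnOff ω E v b := by
  induction h using ReflTransGen.head_induction_on with
  | refl => exact Or.inl ReflTransGen.refl
  | @head a c hac _ ih =>
    rcases ih with hc | hv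
    · by_cases he : s(a, c) ∈ E
      · exact Or.inr ⟨c, ⟨s(a, c), he, Sym2.mem_mk_right a c⟩, hc⟩
      · exact Or.inl (ReflTransGen.head ⟨hac, he⟩ hc)
    · exact Or.inr hv

lemma mem_disjOcc_occupiedEvent {d : ℕ} {ω : BondConfig d} {E : Finset (Sym2 (Vtx d))}
    {F : Set (BondConfig d)} (hE : ω ∈ occupiedEvent E)
    (hF : ∀ ω' : BondConfig d, (∀ e ∈ (↑E : Set (Sym2 (Vtx d)))ᶜ, ω' e = ω e) → ω' ∈ F) :
    ω ∈ DisjOcc (occupiedEvent E) F :=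
  ⟨E, (↑E)ᶜ, disjoint_compl_right, fun _ hω' e he => (hω' e he).trans (hE e he), hF⟩

theorem extra_path_from_single_connection_general
    {d : ℕ} (W : Set (Vtx d)) (y : Vtx d)
    (E : Finset (Sym2 (Vtx d))) :
    occupiedEvent E ∩ ConnToSet W y ⊆
      DisjOcc (occupiedEvent E) (ConnToSet (edgeVerts E) y) ∪
        DisjOcc (occupiedEvent E) (ConnToSet W y) := by
  rintro ω ⟨hocc, w, hw, hconn⟩
  rcases hconn.connOff_or_exists_edgeVerts E with hoff | ⟨v, hv, hoff⟩
  · exact Or.inr <| mem_disjOcc_occupiedEvent hocc fun _ hω' =>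
      ⟨w, hw, hoff.conn_of_eqOn_compl hω'⟩
  · exact Or.inl <| mem_disjOcc_occupiedEvent hocc fun _ hω' =>
      ⟨v, hv, hoff.conn_of_eqOn_compl hω'⟩

/-- **Extra disjoint path from a single connection** (Lemma 4.21).
If all edges of `E` are occupied and `{W ↔ y}` occurs, then one can extract
an extra disjoint connection, either from `y` to `V(E)` or from `W` to `y`. -/
theorem extra_path_from_single_connection
    {d : ℕ} (W : Set (Vtx d)) (y : Vtx d)
    (E : Finset (Sym2 (Vtx d))) (hE : E.Nonempty)
    (hEnd : ∀ e ∈ E, ¬ e.IsDiag) :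
    occupiedEvent E ∩ ConnToSet W y ⊆
      DisjOcc (occupiedEvent E) (ConnToSet (edgeVerts E) y) ∪
        DisjOcc (occupiedEvent E) (ConnToSet W y) :=
  extra_path_from_single_connection_general W y E
end

section
/- Two extra disjoint paths from a disjoint double connection (content of Lemma 4.23). Let ω be a percolation configuration on ℤ^d, let E be a finite nonempty set of ω-occupied edges, let u, v ∈ V(E), and let b ∈ ℤ^d. If ω ∈ {v ↔ b} ∘ {b ↔ u}, then there exist two ω-occupied paths π₁ and π₂, each starting at b and ending at a vertex of V(E), such that π₁ and π₂ are edge-disjoint from each other and neither π₁ nor π₂ uses any edge of E (the paths may be trivial if b ∈ V(E)). -/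
/-- The list of (unordered) edges traversed by a list of vertices. -/
def listEdges {α : Type*} (l : List α) : List (Sym2 α) :=
  (l.zip l.tail).map fun p => s(p.1, p.2)

/-!
Let `B₁, B₂` witness the disjoint occurrence. Setting every edge off `Bᵢ` vacant keeps the
respective connection event, so `b` is joined to `v` using only occupied edges of `B₁` and to
`u` using only occupied edges of `B₂`. Take a self-avoiding such path from `b` and cut it at
its first visit to `V(E)`. The two resulting paths are edge-disjoint because `B₁ ∩ B₂ = ∅`, and
every edge of either path has its earlier endpoint outside `V(E)`, so it is not an edge of `E`.
-/

namespace List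

variable {α : Type*}

theorem exists_eq_append_of_mem_listEdges {e : Sym2 α} :
    ∀ {l : List α}, e ∈ listEdges l →
      ∃ l₁ l₂ x y, l = l₁ ++ x :: y :: l₂ ∧ e = s(x, y)
  | [], he | [_], he => by simp [listEdges] at he
  | x :: y :: t, he => by
    rcases List.mem_cons.mp he with rfl | he
    · exact ⟨[], t, x, y, rfl, rfl⟩
    · obtain ⟨l₁, l₂, x', y', hl, rfl⟩ := exists_eq_append_of_mem_listEdges he
      exact ⟨x :: l₁, l₂, x', y', by rw [cons_append, ← hl], rfl⟩

theorem IsChain.exists_rel_of_mem_listEdges {R : α → α → Prop} {l : List α} {e : Sym2 α}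
    (hl : l.IsChain R) (he : e ∈ listEdges l) :
    ∃ x y, e = s(x, y) ∧ x ∈ l.dropLast ∧ R x y := by
  obtain ⟨l₁, l₂, x, y, rfl, rfl⟩ := exists_eq_append_of_mem_listEdges he
  refine ⟨x, y, rfl, ?_, isChain_iff_forall_rel_of_append_cons_cons.mp hl rfl⟩
  simp [dropLast_append_of_ne_nil]

theorem exists_prefix_ending_at_first_mem (S : Set α) :
    ∀ {l : List α}, (∃ x ∈ l, x ∈ S) →
      ∃ l', l' <+: l ∧ l'.head? = l.head? ∧ (∃ w ∈ S, l'.getLast? = some w) ∧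
        ∀ x ∈ l'.dropLast, x ∉ S
  | [], h => by simp at h
  | a :: t, h => by
    by_cases ha : a ∈ S
    · exact ⟨[a], ⟨t, rfl⟩, rfl, ⟨a, ha, rfl⟩, by simp⟩
    obtain ⟨l', ⟨r, rfl⟩, -, ⟨w, hw, hlast⟩, hdrop⟩ :=
      exists_prefix_ending_at_first_mem S (l := t) (by simpa [ha] using h)
    have hl' : l' ≠ [] := by rintro rfl; simp at hlast
    refine ⟨a :: l', ⟨r, rfl⟩, rfl, ⟨w, hw, by simp [getLast?_cons, hlast]⟩, ?_⟩
    rw [dropLast_cons_of_ne_nil hl']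
    rintro x (_ | ⟨_, hx⟩)
    exacts [ha, hdrop x hx]

end List

theorem SimpleGraph.Reachable.exists_path_to_set {V : Type*} {G : SimpleGraph V} {S : Set V}
    {b x : V} (h : G.Reachable b x) (hx : x ∈ S) :
    ∃ l : List V, l.head? = some b ∧ (∃ w ∈ S, l.getLast? = some w) ∧ l.Nodup ∧
      l.IsChain G.Adj ∧ ∀ y ∈ l.dropLast, y ∉ S := by
  classical
  obtain ⟨p⟩ := h
  obtain ⟨l, hpre, hhead, hlast, hdrop⟩ :=
    List.exists_prefix_ending_at_first_mem S ⟨x, p.bypass.end_mem_support, hx⟩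
  refine ⟨l, ?_, hlast, hpre.sublist.nodup p.bypass_isPath.support_nodup,
    p.bypass.isChain_adj_support.prefix hpre, hdrop⟩
  rw [hhead, ← p.bypass.cons_tail_support]
  rfl

section Percolation

variable {d : ℕ}

theorem occEdge_symm {ω : BondConfig d} {a b : Vtx d} (h : occEdge ω a b) : occEdge ω b a :=
  ⟨h.1.symm, Sym2.eq_swap ▸ h.2⟩

def occGraph (ω : BondConfig d) : SimpleGraph (Vtx d) where
  Adj := occEdge ω
  symm := ⟨fun _ _ => occEdge_symm⟩
  loopless := ⟨fun _ h => h.1 rfl⟩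

theorem Conn.reachable {ω : BondConfig d} {a b : Vtx d} (h : Conn ω a b) :
    (occGraph ω).Reachable a b := by
  induction h with
  | refl => rfl
  | tail _ hstep ih => exact ih.trans (SimpleGraph.Adj.reachable hstep)

open Classical in
noncomputable def restrictConfig (ω : BondConfig d) (B : Set (Sym2 (Vtx d))) : BondConfig d :=
  fun e => if e ∈ B then ω e else false

theorem restrictConfig_of_mem {ω : BondConfig d} {B : Set (Sym2 (Vtx d))} {e : Sym2 (Vtx d)}
    (he : e ∈ B) : restrictConfig ω B e = ω e := by
  simp [restrictConfig, he]

theorem occEdge_restrictConfig {ω : BondConfig d} {B : Set (Sym2 (Vtx d))} {a b : Vtx d} :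
    occEdge (restrictConfig ω B) a b ↔ occEdge ω a b ∧ s(a, b) ∈ B := by
  by_cases h : s(a, b) ∈ B <;> simp [occEdge, restrictConfig, h]

theorem exists_path_to_edgeVerts {ω : BondConfig d} {B : Set (Sym2 (Vtx d))}
    {E : Finset (Sym2 (Vtx d))} {b x : Vtx d}
    (h : (occGraph (restrictConfig ω B)).Reachable b x) (hx : x ∈ edgeVerts E) :
    ∃ l : List (Vtx d), l.head? = some b ∧ (∃ w ∈ edgeVerts E, l.getLast? = some w) ∧
      l.Nodup ∧ l.IsChain (occEdge ω) ∧
      (∀ e ∈ listEdges l, e ∈ B) ∧ ∀ e ∈ listEdges l, e ∉ E := by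
  obtain ⟨l, hb, hw, hnodup, hchain, hdrop⟩ := h.exists_path_to_set hx
  have hedge : ∀ e ∈ listEdges l, ∃ x y, e = s(x, y) ∧ x ∉ edgeVerts E ∧
      occEdge ω x y ∧ s(x, y) ∈ B := by
    intro e he
    obtain ⟨x, y, rfl, hxl, hxy⟩ := hchain.exists_rel_of_mem_listEdges he
    exact ⟨x, y, rfl, hdrop x hxl, occEdge_restrictConfig.mp hxy⟩
  refine ⟨l, hb, hw, hnodup, hchain.imp fun _ _ h => (occEdge_restrictConfig.mp h).1,
    fun e he => ?_, fun e he heE => ?_⟩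
  · obtain ⟨x, y, rfl, -, -, hB⟩ := hedge e he
    exact hB
  · obtain ⟨x, y, rfl, hxE, -⟩ := hedge e he
    exact hxE ⟨_, heE, Sym2.mem_mk_left x y⟩

end Percolation

theorem two_extra_disjoint_paths_general
    {d : ℕ} (ω : BondConfig d)
    (E : Finset (Sym2 (Vtx d)))
    (u v : Vtx d) (hu : u ∈ edgeVerts E) (hv : v ∈ edgeVerts E)
    (b : Vtx d)
    (hω : ω ∈ DisjOcc (ConnEvent v b) (ConnEvent b u)) :
    ∃ l₁ l₂ : List (Vtx d),
      l₁.head? = some b ∧ l₂.head? = some b ∧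
      (∃ w₁ ∈ edgeVerts E, l₁.getLast? = some w₁) ∧
      (∃ w₂ ∈ edgeVerts E, l₂.getLast? = some w₂) ∧
      l₁.Nodup ∧ l₂.Nodup ∧
      l₁.Chain' (occEdge ω) ∧ l₂.Chain' (occEdge ω) ∧
      (listEdges l₁).Disjoint (listEdges l₂) ∧
      (∀ e ∈ listEdges l₁, e ∉ E) ∧ (∀ e ∈ listEdges l₂, e ∉ E) := by
  obtain ⟨B₁, B₂, hdisj, h₁, h₂⟩ := hω
  have hvb : Conn (restrictConfig ω B₁) v b := h₁ _ fun _ => restrictConfig_of_mem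
  have hbu : Conn (restrictConfig ω B₂) b u := h₂ _ fun _ => restrictConfig_of_mem
  obtain ⟨l₁, hb₁, hw₁, hn₁, hc₁, hB₁, hE₁⟩ := exists_path_to_edgeVerts hvb.reachable.symm hv
  obtain ⟨l₂, hb₂, hw₂, hn₂, hc₂, hB₂, hE₂⟩ := exists_path_to_edgeVerts hbu.reachable hu
  exact ⟨l₁, l₂, hb₁, hb₂, hw₁, hw₂, hn₁, hn₂, hc₁, hc₂,
    fun e he₁ he₂ => Set.disjoint_left.mp hdisj (hB₁ e he₁) (hB₂ e he₂), hE₁, hE₂⟩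

/-- **Two extra disjoint paths from a disjoint double connection** (Lemma 4.23).
If the edges of `E` are occupied, `u, v ∈ V(E)`, and `{v ↔ b} ∘ {b ↔ u}` occurs,
then there are two occupied paths starting at `b` and ending in `V(E)`, which are
edge-disjoint from each other and avoid the edges of `E`. -/
theorem two_extra_disjoint_paths
    {d : ℕ} (ω : BondConfig d)
    (E : Finset (Sym2 (Vtx d))) (hE : E.Nonempty)
    (hEnd : ∀ e ∈ E, ¬ e.IsDiag)
    (hocc : ∀ e ∈ E, ω e = true)
    (u v : Vtx d) (hu : u ∈ edgeVerts E) (hv : v ∈ edgeVerts E)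
    (b : Vtx d)
    (hω : ω ∈ DisjOcc (ConnEvent v b) (ConnEvent b u)) :
    ∃ l₁ l₂ : List (Vtx d),
      l₁.head? = some b ∧ l₂.head? = some b ∧
      (∃ w₁ ∈ edgeVerts E, l₁.getLast? = some w₁) ∧
      (∃ w₂ ∈ edgeVerts E, l₂.getLast? = some w₂) ∧
      l₁.Nodup ∧ l₂.Nodup ∧
      l₁.Chain' (occEdge ω) ∧ l₂.Chain' (occEdge ω) ∧
      (listEdges l₁).Disjoint (listEdges l₂) ∧
      (∀ e ∈ listEdges l₁, e ∉ E) ∧ (∀ e ∈ listEdges l₂, e ∉ E) :=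
  two_extra_disjoint_paths_general ω E u v hu hv b hω
end

section
/- Hölder bound for the open triangle (Lemma 4.16). Fix a dimension d > 6 and constants 0 < c ≤ C₀, and let τ: ℤ^d → [0,1] satisfy τ(0) = 1, τ(−x) = τ(x), and c(1+|x|)^{2−d} ≤ τ(x) ≤ C₀(1+|x|)^{2−d} for all x ∈ ℤ^d ∖ {0}. Then there is a constant C, depending only on d, c, C₀, such that for all u, u' ∈ ℤ^d: ∑_{x ∈ ℤ^d} τ(x) τ(x−u') τ(x−u) ≤ C ( τ(u) τ(u−u') τ(u') )^{1/2}. -/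
/-!
Put `a = 1 + |x|`, `b = 1 + |x - u|`, `e = 1 + |x - u'|` and `A = 1 + |u|`, `B = 1 + |u'|`,
`E = 1 + |u - u'|`. The triangle inequality gives `A ≤ a + b`, `B ≤ a + e`, `E ≤ b + e`, and
with `μ = min a b e` we have `(a + b) μ ≤ 2ab` etc., hence `A B E μ³ ≤ 8 (a b e)²`.
Since `τ` is comparable to `(1 + |·|)^(-m)` with `m = d - 2`, each summand is at most a constant
times `(A B E)^(-m/2) μ^(-3m/2)`. The first factor is comparable to `√(τ(u) τ(u - u') τ(u'))`,
and `μ^(-3m/2) ≤ a^(-3m/2) + b^(-3m/2) + e^(-3m/2)` is summable in `x` as `3m/2 > d`,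
which is exactly `d > 6`.
-/

open scoped ENNReal

lemma add_mul_le_two_mul {a b μ : ℝ} (hμ : 0 ≤ μ) (ha : μ ≤ a) (hb : μ ≤ b) :
    (a + b) * μ ≤ 2 * (a * b) := by
  nlinarith

lemma mul_mul_mul_min_pow_three_le {a b e A B E : ℝ} (ha : 0 < a) (hb : 0 < b) (he : 0 < e)
    (hB : 0 ≤ B) (hE : 0 ≤ E) (hAab : A ≤ a + b) (hBae : B ≤ a + e) (hEbe : E ≤ b + e) :
    A * B * E * min a (min b e) ^ 3 ≤ 8 * (a * b * e) ^ 2 := by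
  set μ := min a (min b e)
  have hμ : 0 ≤ μ := by positivity
  have hμa : μ ≤ a := min_le_left _ _
  have hμb : μ ≤ b := (min_le_right _ _).trans (min_le_left _ _)
  have hμe : μ ≤ e := (min_le_right _ _).trans (min_le_right _ _)
  calc A * B * E * μ ^ 3 = (A * μ) * (B * μ) * (E * μ) := by ring
    _ ≤ ((a + b) * μ) * ((a + e) * μ) * ((b + e) * μ) := by gcongr
    _ ≤ (2 * (a * b)) * (2 * (a * e)) * (2 * (b * e)) := by
        gcongr ?_ * ?_ * ?_
        · exact add_mul_le_two_mul hμ hμa hμb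
        · exact add_mul_le_two_mul hμ hμa hμe
        · exact add_mul_le_two_mul hμ hμb hμe
    _ = 8 * (a * b * e) ^ 2 := by ring

lemma min_rpow_neg_le_add {a b e : ℝ} (s : ℝ) (ha : 0 ≤ a) (hb : 0 ≤ b) (he : 0 ≤ e) :
    min a (min b e) ^ (-s) ≤ a ^ (-s) + b ^ (-s) + e ^ (-s) := by
  have := Real.rpow_nonneg ha (-s)
  have := Real.rpow_nonneg hb (-s)
  have := Real.rpow_nonneg he (-s)
  rcases min_choice a (min b e) with h | h <;> rw [h]
  · linarith
  rcases min_choice b e with h | h <;> rw [h] <;> linarith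

lemma mul_mul_rpow_neg_le {a b e A B E m : ℝ} (hm : 0 ≤ m)
    (ha : 0 < a) (hb : 0 < b) (he : 0 < e) (hA : 0 < A) (hB : 0 < B) (hE : 0 < E)
    (hAab : A ≤ a + b) (hBae : B ≤ a + e) (hEbe : E ≤ b + e) :
    (a * b * e) ^ (-m) ≤
      8 ^ (m / 2) * (A * B * E) ^ (-(m / 2)) *
        (a ^ (-(3 * m / 2)) + b ^ (-(3 * m / 2)) + e ^ (-(3 * m / 2))) := by
  set μ := min a (min b e)
  have hμ : 0 < μ := by positivity
  have key := mul_mul_mul_min_pow_three_le ha hb he hB.le hE.le hAab hBae hEbe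
  calc (a * b * e) ^ (-m) = ((a * b * e) ^ 2) ^ (-(m / 2)) := by
        rw [← Real.rpow_natCast, ← Real.rpow_mul (by positivity)]
        ring_nf
    _ ≤ (A * B * E * μ ^ 3 / 8) ^ (-(m / 2)) :=
        Real.rpow_le_rpow_of_nonpos (by positivity) (by linarith) (by linarith)
    _ = 8 ^ (m / 2) * (A * B * E) ^ (-(m / 2)) * μ ^ (-(3 * m / 2)) := by
        rw [Real.div_rpow (by positivity) (by norm_num),
          Real.mul_rpow (by positivity) (by positivity), ← Real.rpow_natCast μ 3,
          ← Real.rpow_mul hμ.le, Real.rpow_neg (by norm_num : (0:ℝ) ≤ 8)]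
        push_cast
        field_simp
    _ ≤ 8 ^ (m / 2) * (A * B * E) ^ (-(m / 2)) *
          (a ^ (-(3 * m / 2)) + b ^ (-(3 * m / 2)) + e ^ (-(3 * m / 2))) := by
        gcongr
        exact min_rpow_neg_le_add _ ha.le hb.le he.le

lemma summable_pi_prod_of_nonneg {ι α : Type*} [Fintype ι] {g : α → ℝ} (hg0 : 0 ≤ g)
    (hg : Summable g) :
    Summable (fun x : ι → α => ∏ i, g (x i)) := by
  classical
  refine summable_of_sum_le (fun x => Finset.prod_nonneg fun i _ => hg0 _)
    (c := (∑' a, g a) ^ Fintype.card ι) fun s => ?_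
  set T := s.biUnion fun x => Finset.univ.image x
  have hsT : s ⊆ Fintype.piFinset fun _ => T := fun x hx =>
    Fintype.mem_piFinset.2 fun i =>
      Finset.mem_biUnion.2 ⟨x, hx, Finset.mem_image_of_mem x (Finset.mem_univ i)⟩
  calc ∑ x ∈ s, ∏ i, g (x i)
      ≤ ∑ x ∈ Fintype.piFinset fun _ => T, ∏ i, g (x i) :=
        Finset.sum_le_sum_of_subset_of_nonneg hsT fun x _ _ =>
          Finset.prod_nonneg fun i _ => hg0 _
    _ = (∑ a ∈ T, g a) ^ Fintype.card ι := by
        rw [Finset.sum_prod_piFinset, Finset.prod_const, Finset.card_univ]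
    _ ≤ (∑' a, g a) ^ Fintype.card ι := by
        gcongr
        · exact Finset.sum_nonneg fun a _ => hg0 a
        · exact hg.sum_le_tsum T fun a _ => hg0 a

lemma summable_one_add_abs_int_rpow_neg {p : ℝ} (hp : 1 < p) :
    Summable fun n : ℤ => (1 + |(n : ℝ)|) ^ (-p) := by
  refine Summable.of_norm_bounded_eventually (Real.summable_abs_int_rpow hp) ?_
  filter_upwards [Set.Finite.compl_mem_cofinite (Set.finite_singleton (0 : ℤ))] with n hn
  have hn : 0 < |(n : ℝ)| := by simpa using hn
  rw [Real.norm_of_nonneg (by positivity)]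
  exact Real.rpow_le_rpow_of_nonpos hn (by linarith) (by linarith)

lemma hasSum_add_add_translates {G : Type*} [AddGroup G] {ψ : G → ℝ} (hψ : Summable ψ)
    (u u' : G) :
    HasSum (fun x => ψ x + ψ (x - u) + ψ (x - u')) (3 * ∑' x, ψ x) := by
  rw [show 3 * ∑' x, ψ x = ∑' x, ψ x + ∑' x, ψ x + ∑' x, ψ x by ring]
  exact (hψ.hasSum.add ((Equiv.subRight u).hasSum_iff.2 hψ.hasSum)).add
    ((Equiv.subRight u').hasSum_iff.2 hψ.hasSum)

lemma tsum_ofReal_le_of_hasSum {α : Type*} {f g : α → ℝ} {a : ℝ} (hg : HasSum g a)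
    (hg0 : ∀ x, 0 ≤ g x) (hfg : ∀ x, f x ≤ g x) :
    ∑' x, ENNReal.ofReal (f x) ≤ ENNReal.ofReal a := by
  rw [← hg.tsum_eq, ENNReal.ofReal_tsum_of_nonneg hg0 hg.summable]
  exact ENNReal.tsum_le_tsum fun x => ENNReal.ofReal_le_ofReal (hfg x)

section Znorm

variable {d : ℕ}

lemma znorm_eq_norm (x : Vtx d) :
    znorm x = ‖WithLp.toLp 2 (fun i => (x i : ℝ))‖ := by
  simp [znorm, EuclideanSpace.norm_eq]

lemma znorm_nonneg (x : Vtx d) : 0 ≤ znorm x := Real.sqrt_nonneg _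

@[simp] lemma znorm_zero : znorm (0 : Vtx d) = 0 := by simp [znorm]

lemma znorm_sub_le (x y : Vtx d) : znorm (x - y) ≤ znorm x + znorm y := by
  have hsub : WithLp.toLp 2 (fun i => ((x - y) i : ℝ)) =
      WithLp.toLp 2 (fun i => (x i : ℝ)) - WithLp.toLp 2 (fun i => (y i : ℝ)) := by
    ext i
    simp
  simpa only [znorm_eq_norm, hsub] using norm_sub_le _ _

lemma abs_le_znorm (x : Vtx d) (i : Fin d) : |(x i : ℝ)| ≤ znorm x := by
  rw [← Real.sqrt_sq_eq_abs]
  exact Real.sqrt_le_sqrt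
    (Finset.single_le_sum (fun j _ => sq_nonneg (x j : ℝ)) (Finset.mem_univ i))

end Znorm

noncomputable def decay {d : ℕ} (m : ℝ) (x : Vtx d) : ℝ := (1 + znorm x) ^ (-m)

section Decay

variable {d : ℕ}

lemma one_add_znorm_pos (x : Vtx d) : 0 < 1 + znorm x := by linarith [znorm_nonneg x]

lemma decay_pos (m : ℝ) (x : Vtx d) : 0 < decay m x :=
  Real.rpow_pos_of_pos (one_add_znorm_pos x) _

lemma decay_nonneg (m : ℝ) (x : Vtx d) : 0 ≤ decay m x := (decay_pos m x).le

@[simp] lemma decay_zero (m : ℝ) : decay m (0 : Vtx d) = 1 := by simp [decay]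

lemma decay_le_prod (hd : 0 < d) (s : ℝ) (hs : 0 ≤ s) (x : Vtx d) :
    decay s x ≤ ∏ i, (1 + |(x i : ℝ)|) ^ (-(s / d)) := by
  have hprod : ∏ i, (1 + |(x i : ℝ)|) ≤ (1 + znorm x) ^ d := by
    calc ∏ i, (1 + |(x i : ℝ)|) ≤ ∏ _i : Fin d, (1 + znorm x) :=
          Finset.prod_le_prod (fun i _ => by positivity)
            fun i _ => by linarith [abs_le_znorm x i]
      _ = (1 + znorm x) ^ d := by simp
  rw [Real.finsetProd_rpow _ _ fun i _ => by positivity, decay]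
  calc (1 + znorm x) ^ (-s) = ((1 + znorm x) ^ d) ^ (-(s / d)) := by
        rw [← Real.rpow_natCast, ← Real.rpow_mul (one_add_znorm_pos x).le]
        field_simp
    _ ≤ (∏ i, (1 + |(x i : ℝ)|)) ^ (-(s / d)) :=
        Real.rpow_le_rpow_of_nonpos (Finset.prod_pos fun i _ => by positivity) hprod
          (neg_nonpos.2 (by positivity))

lemma summable_decay {s : ℝ} (hs : (d : ℝ) < s) : Summable (decay s : Vtx d → ℝ) := by
  rcases d.eq_zero_or_pos with rfl | hd
  · exact Summable.of_finite
  have hp : 1 < s / d := (one_lt_div (by positivity)).2 hs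
  refine (summable_pi_prod_of_nonneg (fun n => by positivity)
    (summable_one_add_abs_int_rpow_neg hp)).of_nonneg_of_le (decay_nonneg s) (decay_le_prod hd s ?_)
  linarith [(Nat.cast_nonneg d : (0:ℝ) ≤ d)]

end Decay

lemma one_add_znorm_sub_le {d : ℕ} (y z : Vtx d) :
    1 + znorm (y - z) ≤ (1 + znorm y) + (1 + znorm z) := by
  linarith [znorm_sub_le y z]

lemma decay_mul_decay_mul_decay_le {d : ℕ} {m : ℝ} (hm : 0 ≤ m) (x u u' : Vtx d) :
    decay m x * decay m (x - u') * decay m (x - u) ≤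
      8 ^ (m / 2) * √(decay m u * decay m (u - u') * decay m u') *
        (decay (3 * m / 2) x + decay (3 * m / 2) (x - u) + decay (3 * m / 2) (x - u')) := by
  have hAab := sub_sub_cancel x u ▸ one_add_znorm_sub_le x (x - u)
  have hBae := sub_sub_cancel x u' ▸ one_add_znorm_sub_le x (x - u')
  have hEeb := sub_sub_sub_cancel_left u' u x ▸ one_add_znorm_sub_le (x - u') (x - u)
  have ha := one_add_znorm_pos x
  have hb := one_add_znorm_pos (x - u)
  have he := one_add_znorm_pos (x - u')
  have hA := one_add_znorm_pos u
  have hB := one_add_znorm_pos u'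
  have hE := one_add_znorm_pos (u - u')
  simp only [decay]
  generalize 1 + znorm x = a, 1 + znorm (x - u) = b, 1 + znorm (x - u') = e,
    1 + znorm u = A, 1 + znorm u' = B, 1 + znorm (u - u') = E at *
  have hsqrt : √(A ^ (-m) * E ^ (-m) * B ^ (-m)) = (A * B * E) ^ (-(m / 2)) := by
    rw [Real.sqrt_eq_rpow, ← Real.mul_rpow hA.le hE.le, ← Real.mul_rpow (by positivity) hB.le,
      ← Real.rpow_mul (by positivity)]
    ring_nf
  rw [hsqrt, ← Real.mul_rpow ha.le he.le, ← Real.mul_rpow (by positivity) hb.le]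
  convert mul_mul_rpow_neg_le hm ha hb he hA hB hE hAab hBae (by linarith) using 2
  ring

section Comparison

variable {d : ℕ} {τ : Vtx d → ℝ} {m : ℝ}

lemma min_one_mul_decay_le {c : ℝ} (h0 : 1 ≤ τ 0)
    (h : ∀ x, x ≠ 0 → c * decay m x ≤ τ x) (x : Vtx d) : min c 1 * decay m x ≤ τ x := by
  rcases eq_or_ne x 0 with rfl | hx
  · simpa using (min_le_right c 1).trans h0
  · exact (mul_le_mul_of_nonneg_right (min_le_left c 1) (decay_nonneg m x)).trans (h x hx)

lemma le_max_one_mul_decay {C : ℝ} (h0 : τ 0 ≤ 1)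
    (h : ∀ x, x ≠ 0 → τ x ≤ C * decay m x) (x : Vtx d) : τ x ≤ max C 1 * decay m x := by
  rcases eq_or_ne x 0 with rfl | hx
  · simpa using h0.trans (le_max_right C 1)
  · exact (h x hx).trans (mul_le_mul_of_nonneg_right (le_max_left C 1) (decay_nonneg m x))

lemma mul_mul_le_of_decay_bounds {c C : ℝ} (hm : 0 ≤ m) (hc : 0 < c) (hτ : ∀ x, 0 ≤ τ x)
    (hlo : ∀ x, c * decay m x ≤ τ x) (hup : ∀ x, τ x ≤ C * decay m x) (x u u' : Vtx d) :
    τ x * τ (x - u') * τ (x - u) ≤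
      C ^ 3 * 8 ^ (m / 2) / √(c ^ 3) * √(τ u * τ (u - u') * τ u') *
        (decay (3 * m / 2) x + decay (3 * m / 2) (x - u) + decay (3 * m / 2) (x - u')) := by
  have hC : 0 ≤ C := by simpa using (hτ 0).trans (hup 0)
  have hcube_le {y z w : Vtx d} :
      τ y * τ z * τ w ≤ C ^ 3 * (decay m y * decay m z * decay m w) :=
    calc τ y * τ z * τ w ≤ (C * decay m y) * (C * decay m z) * (C * decay m w) :=
          mul_le_mul (mul_le_mul (hup y) (hup z) (hτ z) ((hτ y).trans (hup y))) (hup w) (hτ w)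
            (mul_nonneg ((hτ y).trans (hup y)) ((hτ z).trans (hup z)))
      _ = C ^ 3 * (decay m y * decay m z * decay m w) := by ring
  have hle_cube {y z w : Vtx d} :
      c ^ 3 * (decay m y * decay m z * decay m w) ≤ τ y * τ z * τ w :=
    calc c ^ 3 * (decay m y * decay m z * decay m w)
        = (c * decay m y) * (c * decay m z) * (c * decay m w) := by ring
      _ ≤ τ y * τ z * τ w :=
          mul_le_mul (mul_le_mul (hlo y) (hlo z) (by positivity [decay_nonneg m z]) (hτ y))
            (hlo w) (by positivity [decay_nonneg m w]) (mul_nonneg (hτ y) (hτ z))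
  have hsqrt : √(decay m u * decay m (u - u') * decay m u') ≤
      √(τ u * τ (u - u') * τ u') / √(c ^ 3) := by
    rw [le_div_iff₀ (by positivity), ← Real.sqrt_mul' _ (by positivity)]
    exact Real.sqrt_le_sqrt (by linarith [hle_cube (y := u) (z := u - u') (w := u')])
  have hψ :
      0 ≤ decay (3 * m / 2) x + decay (3 * m / 2) (x - u) + decay (3 * m / 2) (x - u') := by
    positivity [decay_nonneg (3 * m / 2) x, decay_nonneg (3 * m / 2) (x - u),
      decay_nonneg (3 * m / 2) (x - u')]
  calc τ x * τ (x - u') * τ (x - u)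
      ≤ C ^ 3 * (decay m x * decay m (x - u') * decay m (x - u)) := hcube_le
    _ ≤ C ^ 3 * (8 ^ (m / 2) * √(decay m u * decay m (u - u') * decay m u') *
          (decay (3 * m / 2) x + decay (3 * m / 2) (x - u) + decay (3 * m / 2) (x - u'))) :=
        mul_le_mul_of_nonneg_left (decay_mul_decay_mul_decay_le hm x u u') (by positivity)
    _ ≤ C ^ 3 * (8 ^ (m / 2) * (√(τ u * τ (u - u') * τ u') / √(c ^ 3)) *
          (decay (3 * m / 2) x + decay (3 * m / 2) (x - u) + decay (3 * m / 2) (x - u'))) := by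
        gcongr
    _ = _ := by ring

end Comparison

theorem holder_open_triangle_bound_general
    (d : ℕ) (hd : 6 < d) (c C₀ : ℝ) (hc : 0 < c) :
    ∃ C : ℝ, 0 < C ∧
      ∀ τ : Vtx d → ℝ,
        (∀ x, 0 ≤ τ x ∧ τ x ≤ 1) →
        τ 0 = 1 →
        (∀ x, τ (-x) = τ x) →
        (∀ x : Vtx d, x ≠ 0 →
          c * (1 + znorm x) ^ (2 - (d : ℝ)) ≤ τ x ∧
          τ x ≤ C₀ * (1 + znorm x) ^ (2 - (d : ℝ))) →
        ∀ u u' : Vtx d,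
          (∑' x : Vtx d, ENNReal.ofReal (τ x * τ (x - u') * τ (x - u))) ≤
            ENNReal.ofReal (C * Real.sqrt (τ u * τ (u - u') * τ u')) := by
  set m : ℝ := d - 2
  have hd' : (6 : ℝ) < d := by exact_mod_cast hd
  have hm : 0 ≤ m := by linarith
  have hsum := summable_decay (d := d) (s := 3 * m / 2) (by linarith)
  have hdecay (x : Vtx d) : (1 + znorm x) ^ (2 - (d : ℝ)) = decay m x := by rw [decay, neg_sub]
  set M := max C₀ 1 ^ 3 * 8 ^ (m / 2) / √(min c 1 ^ 3)
  set K := ∑' x : Vtx d, decay (3 * m / 2) x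
  have hK : 0 < K := hsum.tsum_pos (decay_nonneg _) 0 (decay_pos _ 0)
  refine ⟨M * (3 * K), by positivity, fun τ hτ hτ0 _ hτbounds u u' => ?_⟩
  have hlo := min_one_mul_decay_le hτ0.ge fun x hx => hdecay x ▸ (hτbounds x hx).1
  have hup := le_max_one_mul_decay hτ0.le fun x hx => hdecay x ▸ (hτbounds x hx).2
  have hbound := mul_mul_le_of_decay_bounds hm (lt_min hc one_pos) (fun x => (hτ x).1) hlo hup
  calc ∑' x, ENNReal.ofReal (τ x * τ (x - u') * τ (x - u))
      ≤ ENNReal.ofReal (M * √(τ u * τ (u - u') * τ u') * (3 * K)) :=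
        tsum_ofReal_le_of_hasSum ((hasSum_add_add_translates hsum u u').mul_left _)
          (fun x => by
            positivity [decay_nonneg (3 * m / 2) x, decay_nonneg (3 * m / 2) (x - u),
              decay_nonneg (3 * m / 2) (x - u')]) (fun x => hbound x u u')
    _ = ENNReal.ofReal (M * (3 * K) * √(τ u * τ (u - u') * τ u')) := by ring_nf

/-- **Hölder bound for the open triangle** (Lemma 4.16).
If `d > 6` and `τ : ℤ^d → [0,1]` satisfies `τ(0) = 1`, `τ(−x) = τ(x)` and
two-sided bounds `c(1+|x|)^{2−d} ≤ τ(x) ≤ C₀(1+|x|)^{2−d}` for `x ≠ 0`, then there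
is a constant `C = C(d, c, C₀)` with
`∑_x τ(x) τ(x−u') τ(x−u) ≤ C (τ(u) τ(u−u') τ(u'))^{1/2}` for all `u, u'`. -/
theorem holder_open_triangle_bound
    (d : ℕ) (hd : 6 < d) (c C₀ : ℝ) (hc : 0 < c) (hcC : c ≤ C₀) :
    ∃ C : ℝ, 0 < C ∧
      ∀ τ : Vtx d → ℝ,
        (∀ x, 0 ≤ τ x ∧ τ x ≤ 1) →
        τ 0 = 1 →
        (∀ x, τ (-x) = τ x) →
        (∀ x : Vtx d, x ≠ 0 →
          c * (1 + znorm x) ^ (2 - (d : ℝ)) ≤ τ x ∧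
          τ x ≤ C₀ * (1 + znorm x) ^ (2 - (d : ℝ))) →
        ∀ u u' : Vtx d,
          (∑' x : Vtx d, ENNReal.ofReal (τ x * τ (x - u') * τ (x - u))) ≤
            ENNReal.ofReal (C * Real.sqrt (τ u * τ (u - u') * τ u')) :=
  holder_open_triangle_bound_general d hd c C₀ hc
end

section
/- Weighted triangle bound (Lemma 4.14). Fix a dimension d > 6 and constants 0 < c ≤ C₀, and let τ: ℤ^d → [0,1] satisfy τ(0) = 1, τ(−x) = τ(x), and c(1+|x|)^{2−d} ≤ τ(x) ≤ C₀(1+|x|)^{2−d} for all x ∈ ℤ^d ∖ {0}. Then there is a constant C, depending only on d, c, C₀, such that for all x, x' ∈ ℤ^d: ∑_{y ∈ ℤ^d} τ(x) τ(y) τ(y−x) τ(y−x') ≤ C τ(x) τ(x') (1 + min{|x|, |x−x'|})^{−(d−4)}. -/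
/-!
The Euclidean norm and the sup norm `|·|∞` on `ℤ^d` agree up to a factor `√d`, so `τ` is
comparable, above and below, to `(1 + |y|∞)^(2-d)`.

By the triangle inequality one of `|y|∞`, `|y - x'|∞` is at least `|x'|∞ / 2`, so one of
`τ(y)`, `τ(y - x')` is `O(τ(x'))`. Since `ab ≤ min(a, b) (a + b)`, this bounds the sum by
`O(τ(x'))` times the two convolutions `∑_y τ(y - x) τ(y - x')` and `∑_y τ(y) τ(y - x)`.
Both are `O((1 + |·|)^(4-d))` by the convolution estimate
`∑_y (1 + |y|)^(2-d) (1 + |y - z|)^(2-d) = O((1 + |z|)^(4-d))`, valid for `d ≥ 5`: the points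
`y` with `2|y| ≤ |z|` contribute `(1 + |z|)^(2-d)` times a ball sum of order `(1 + |z|)^2`, the
others at most `∑_{2|y| > |z|} (1 + |y|)^(4-2d)`. Both sums are computed shell by shell, the
shell `|y|∞ = m` having at most `d 2^d (m + 1)^(d-1)` points.
-/

open scoped ENNReal

open Finset

namespace WeightedTriangle

variable {d : ℕ}

def supNorm (y : Vtx d) : ℕ := univ.sup fun i => (y i).natAbs

theorem supNorm_le_iff {y : Vtx d} {n : ℕ} : supNorm y ≤ n ↔ ∀ i, (y i).natAbs ≤ n := by
  simp [supNorm]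

theorem natAbs_le_supNorm (y : Vtx d) (i : Fin d) : (y i).natAbs ≤ supNorm y :=
  supNorm_le_iff.mp le_rfl i

@[simp]
theorem supNorm_neg (y : Vtx d) : supNorm (-y) = supNorm y := by
  simp [supNorm]

theorem supNorm_add_le (y z : Vtx d) : supNorm (y + z) ≤ supNorm y + supNorm z :=
  supNorm_le_iff.mpr fun i =>
    (Int.natAbs_add_le _ _).trans (add_le_add (natAbs_le_supNorm y i) (natAbs_le_supNorm z i))

theorem supNorm_sub_comm (y z : Vtx d) : supNorm (y - z) = supNorm (z - y) := by
  rw [← supNorm_neg, neg_sub]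

theorem supNorm_le_add_supNorm_sub (x y : Vtx d) : supNorm x ≤ supNorm y + supNorm (y - x) := by
  simpa [supNorm_sub_comm x y] using supNorm_add_le y (x - y)

theorem znorm_nonneg (y : Vtx d) : 0 ≤ znorm y :=
  Real.sqrt_nonneg _

theorem supNorm_le_znorm (y : Vtx d) : (supNorm y : ℝ) ≤ znorm y := by
  rcases isEmpty_or_nonempty (Fin d) with _ | _
  · simpa [supNorm] using znorm_nonneg y
  obtain ⟨i, -, hi⟩ := exists_mem_eq_sup univ univ_nonempty fun i => (y i).natAbs
  rw [supNorm, hi, Nat.cast_natAbs, Int.cast_abs, znorm]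
  exact Real.abs_le_sqrt (single_le_sum (fun j _ => sq_nonneg ((y j : ℝ))) (mem_univ i))

theorem znorm_le_sqrt_mul_supNorm (y : Vtx d) : znorm y ≤ √d * supNorm y := by
  rw [znorm, ← Real.sqrt_sq (Nat.cast_nonneg (supNorm y)), ← Real.sqrt_mul (Nat.cast_nonneg d)]
  refine Real.sqrt_le_sqrt ?_
  calc ∑ i, ((y i : ℝ)) ^ 2 = ∑ i, (((y i).natAbs : ℕ) : ℝ) ^ 2 := by simp
    _ ≤ ∑ _i : Fin d, ((supNorm y : ℝ)) ^ 2 := by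
        gcongr with i
        exact natAbs_le_supNorm y i
    _ = d * (supNorm y : ℝ) ^ 2 := by simp

theorem one_add_znorm_le (hd : 0 < d) (v : Vtx d) : 1 + znorm v ≤ √d * (supNorm v + 1) := by
  have h1 : 1 ≤ √(d : ℝ) := Real.one_le_sqrt.mpr (by exact_mod_cast hd)
  nlinarith [znorm_le_sqrt_mul_supNorm v, Nat.cast_nonneg (α := ℝ) (supNorm v)]

noncomputable def box (d n : ℕ) : Finset (Vtx d) :=
  Fintype.piFinset fun _ => Icc (-n : ℤ) n

theorem mem_box {n : ℕ} {y : Vtx d} : y ∈ box d n ↔ supNorm y ≤ n := by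
  simp only [box, Fintype.mem_piFinset, mem_Icc, supNorm_le_iff]
  exact forall_congr' fun i => by omega

theorem card_box (d n : ℕ) : #(box d n) = (2 * n + 1) ^ d := by
  simp only [box, Fintype.card_piFinset, Int.card_Icc, prod_const, card_univ, Fintype.card_fin]
  congr 1
  omega

noncomputable def sphere (d m : ℕ) : Finset (Vtx d) :=
  {y ∈ box d m | supNorm y = m}

@[simp]
theorem mem_sphere {m : ℕ} {y : Vtx d} : y ∈ sphere d m ↔ supNorm y = m := by
  rw [sphere, mem_filter, mem_box]
  exact ⟨And.right, fun h => ⟨h.le, h⟩⟩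

theorem card_sphere_le (hd : 0 < d) (m : ℕ) :
    #(sphere d m) ≤ d * 2 ^ d * (m + 1) ^ (d - 1) := by
  cases m with
  | zero =>
    calc #(sphere d 0) ≤ #(box d 0) := card_le_card (filter_subset _ _)
      _ ≤ d * 2 ^ d * (0 + 1) ^ (d - 1) := by
        rw [card_box]
        simpa using Nat.one_le_iff_ne_zero.mpr (by positivity)
  | succ k =>
    have hsub : sphere d (k + 1) ⊆ box d (k + 1) \ box d k := fun y hy => by
      simp only [mem_sdiff, mem_box, mem_sphere.mp hy]
      omega
    have hmono : box d k ⊆ box d (k + 1) := fun y hy => by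
      rw [mem_box] at hy ⊢
      omega
    have hpow := abs_pow_sub_pow_le (α := ℤ) (2 * k + 3) (2 * k + 1) d
    rw [show |(2 * k + 3 : ℤ) - (2 * k + 1)| = 2 by norm_num,
      abs_of_nonneg (by positivity : (0 : ℤ) ≤ 2 * k + 3),
      abs_of_nonneg (by positivity : (0 : ℤ) ≤ 2 * k + 1), max_eq_left (by omega),
      abs_of_nonneg (sub_nonneg.mpr (pow_le_pow_left₀ (by positivity) (by omega) d))] at hpow
    calc #(sphere d (k + 1)) ≤ #(box d (k + 1) \ box d k) := card_le_card hsub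
      _ = (2 * k + 3) ^ d - (2 * k + 1) ^ d := by
        rw [card_sdiff_of_subset hmono, card_box, card_box]
        ring_nf
      _ ≤ 2 * d * (2 * k + 3) ^ (d - 1) := by
        zify [Nat.pow_le_pow_left (by omega : 2 * k + 1 ≤ 2 * k + 3) d]
        exact hpow
      _ ≤ 2 * d * (2 * (k + 1 + 1)) ^ (d - 1) := by gcongr; omega
      _ ≤ d * 2 ^ d * (k + 1 + 1) ^ (d - 1) := by
        rw [mul_pow, mul_comm 2 d, mul_assoc, ← mul_assoc 2, ← pow_succ', mul_assoc]
        gcongr <;> omega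

theorem tsum_comp_supNorm_le (hd : 0 < d) (g : ℕ → ℝ≥0∞) :
    ∑' y : Vtx d, g (supNorm y) ≤ d * 2 ^ d * ∑' m : ℕ, ((m : ℝ≥0∞) + 1) ^ (d - 1) * g m := by
  calc ∑' y : Vtx d, g (supNorm y)
      = ∑' m : ℕ, ∑' y : Vtx d, if m = supNorm y then g m else 0 := by
        rw [ENNReal.tsum_comm]
        exact tsum_congr fun y => (tsum_ite_eq (supNorm y) g).symm
    _ = ∑' m : ℕ, #(sphere d m) * g m := by
        refine tsum_congr fun m => ?_
        rw [tsum_eq_sum (s := sphere d m) (by grind [mem_sphere]),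
          sum_ite_of_true (fun y hy => (mem_sphere.mp hy).symm), sum_const, nsmul_eq_mul]
    _ ≤ ∑' m : ℕ, (d * 2 ^ d * ((m : ℝ≥0∞) + 1) ^ (d - 1)) * g m := by
        gcongr with m
        exact_mod_cast card_sphere_le hd m
    _ = _ := by
        rw [← ENNReal.tsum_mul_left]
        simp only [mul_assoc]

noncomputable def decay (k m : ℕ) : ℝ≥0∞ := ((m : ℝ≥0∞) + 1)⁻¹ ^ k

theorem decay_add (k l m : ℕ) : decay (k + l) m = decay k m * decay l m :=
  pow_add _ _ _

theorem decay_antitone {m n : ℕ} (h : m ≤ n) (k : ℕ) : decay k n ≤ decay k m := by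
  unfold decay
  gcongr

theorem decay_le_two_pow_mul {m n : ℕ} (h : n ≤ 2 * m + 1) (k : ℕ) :
    decay k m ≤ 2 ^ k * decay k n := by
  rw [decay, decay, ← mul_pow]
  gcongr
  rw [ENNReal.inv_le_iff_inv_le, ENNReal.mul_inv (by simp) (by simp), inv_inv,
    ENNReal.inv_mul_le_iff (by simp) (by simp)]
  exact_mod_cast (by omega : n + 1 ≤ 2 * (m + 1))

theorem decay_le_or_decay_le_of_le_add {a p q : ℕ} (h : a ≤ p + q) (k : ℕ) :
    decay k p ≤ 2 ^ k * decay k a ∨ decay k q ≤ 2 ^ k * decay k a := by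
  rcases le_total p q with hpq | hqp
  · exact .inr (decay_le_two_pow_mul (by omega) k)
  · exact .inl (decay_le_two_pow_mul (by omega) k)

theorem pow_mul_decay (k m : ℕ) : ((m : ℝ≥0∞) + 1) ^ k * decay k m = 1 := by
  rw [decay, ← mul_pow, ENNReal.mul_inv_cancel (by simp) (by simp), one_pow]

theorem pow_mul_decay_add (k l m : ℕ) : ((m : ℝ≥0∞) + 1) ^ k * decay (k + l) m = decay l m := by
  rw [decay_add, ← mul_assoc, pow_mul_decay, one_mul]

theorem decay_eq_ofReal (k m : ℕ) :
    decay k m = ENNReal.ofReal (((m : ℝ) + 1) ^ (-(k : ℝ))) := by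
  rw [Real.rpow_neg (by positivity), Real.rpow_natCast, ← inv_pow,
    ENNReal.ofReal_pow (by positivity), ENNReal.ofReal_inv_of_pos (by positivity), decay]
  congr
  rw [ENNReal.ofReal_add (by positivity) zero_le_one]
  simp

theorem ofReal_rpow_neg_le_decay {k m : ℕ} {r : ℝ} (h : (m : ℝ) + 1 ≤ r) :
    ENNReal.ofReal (r ^ (-(k : ℝ))) ≤ decay k m := by
  rw [decay_eq_ofReal]
  exact ENNReal.ofReal_le_ofReal (Real.rpow_le_rpow_of_nonpos (by positivity) h (by simp))

theorem decay_le_ofReal_mul_rpow_neg {k m : ℕ} {r s : ℝ} (hr : 0 < r) (hs : 0 < s)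
    (h : r ≤ s * (m + 1)) :
    decay k m ≤ ENNReal.ofReal (s ^ k) * ENNReal.ofReal (r ^ (-(k : ℝ))) := by
  rw [decay_eq_ofReal, ← ENNReal.ofReal_mul (by positivity)]
  refine ENNReal.ofReal_le_ofReal ?_
  calc ((m : ℝ) + 1) ^ (-(k : ℝ)) = s ^ k * (s * (m + 1)) ^ (-(k : ℝ)) := by
        rw [Real.mul_rpow hs.le (by positivity), ← mul_assoc, Real.rpow_neg hs.le,
          Real.rpow_natCast, mul_inv_cancel₀ (by positivity), one_mul]
    _ ≤ s ^ k * r ^ (-(k : ℝ)) :=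
        mul_le_mul_of_nonneg_left (Real.rpow_le_rpow_of_nonpos hr h (by simp)) (by positivity)

theorem decay_min_le (hd : 0 < d) (k : ℕ) (x y : Vtx d) :
    decay k (min (supNorm x) (supNorm y)) ≤
      ENNReal.ofReal (√d ^ k) * ENNReal.ofReal ((1 + min (znorm x) (znorm y)) ^ (-(k : ℝ))) := by
  refine decay_le_ofReal_mul_rpow_neg (by positivity [znorm_nonneg x, znorm_nonneg y])
    (by positivity) ?_
  rcases le_total (supNorm x) (supNorm y) with h | h
  · rw [min_eq_left h]
    exact (add_le_add_right (min_le_left _ _) 1).trans (one_add_znorm_le hd x)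
  · rw [min_eq_right h]
    exact (add_le_add_right (min_le_right _ _) 1).trans (one_add_znorm_le hd y)

theorem tsum_ite_two_mul_le_le_sq (a : ℕ) :
    ∑' m : ℕ, (if 2 * m ≤ a then (m : ℝ≥0∞) + 1 else 0) ≤ ((a : ℝ≥0∞) + 1) ^ 2 := by
  rw [tsum_eq_sum (s := range (a + 1)) fun m hm => if_neg (by rw [mem_range] at hm; omega), ← sum_filter]
  calc ∑ m ∈ range (a + 1) with 2 * m ≤ a, ((m : ℝ≥0∞) + 1)
      ≤ ∑ _m ∈ range (a + 1), ((a : ℝ≥0∞) + 1) := by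
        refine (sum_le_sum_of_subset_of_nonneg (filter_subset _ _) ?_).trans
          (sum_le_sum fun m hm => ?_)
        · simp
        · gcongr
          rw [mem_range] at hm
          exact_mod_cast (by omega : m ≤ a)
    _ = ((a : ℝ≥0∞) + 1) ^ 2 := by
        rw [sum_const, card_range, nsmul_eq_mul]
        push_cast
        ring

theorem tsum_decay_two_tail_le (n : ℕ) :
    ∑' m : ℕ, (if n ≤ m then decay 2 m else 0) ≤ 2 * decay 1 n := by
  refine ENNReal.tsum_le_of_sum_range_le fun N => ?_
  calc ∑ m ∈ range N, (if n ≤ m then decay 2 m else 0)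
      = ∑ i ∈ Ioo n (N + 1), ENNReal.ofReal (((i : ℝ) ^ 2)⁻¹) := by
        rw [← sum_filter]
        refine sum_nbij' (· + 1) (· - 1) ?_ ?_ ?_ ?_ fun m _ => ?_
        · intro m hm
          simp only [mem_filter, mem_range, mem_Ioo] at hm ⊢
          omega
        · intro m hm
          simp only [mem_filter, mem_range, mem_Ioo] at hm ⊢
          omega
        · simp
        · intro m hm
          rw [mem_Ioo] at hm
          omega
        · rw [decay_eq_ofReal, Real.rpow_neg (by positivity), Real.rpow_natCast]
          push_cast
          rfl
    _ = ENNReal.ofReal (∑ i ∈ Ioo n (N + 1), ((i : ℝ) ^ 2)⁻¹) :=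
        (ENNReal.ofReal_sum_of_nonneg fun i _ => by positivity).symm
    _ ≤ ENNReal.ofReal (2 / (n + 1)) := ENNReal.ofReal_le_ofReal (sum_Ioo_inv_sq_le n (N + 1))
    _ = 2 * decay 1 n := by
        rw [ENNReal.ofReal_div_of_pos (by positivity), div_eq_mul_inv, decay, pow_one]
        norm_cast

/-- If `a ≤ p + q` and `2p ≤ a`, then `2q ≥ a` and `decay k q ≤ 2^k decay k a`; otherwise the
product `decay k p * decay k q` is at most the square of the larger factor. -/
noncomputable def splitBound (k a m : ℕ) : ℝ≥0∞ :=
  if 2 * m ≤ a then 2 ^ k * decay k a * decay k m else decay (2 * k) m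

theorem decay_mul_decay_le_splitBound {k a p q : ℕ} (h : a ≤ p + q) :
    decay k p * decay k q ≤ splitBound k a p + splitBound k a q := by
  wlog hpq : p ≤ q generalizing p q
  · rw [mul_comm, add_comm]
    exact this (by omega) (by omega)
  refine le_add_right ?_
  unfold splitBound
  split_ifs with hp
  · rw [mul_comm]
    gcongr
    exact decay_le_two_pow_mul (by omega) k
  · rw [two_mul, decay_add]
    gcongr
    exact decay_antitone hpq k

theorem pow_mul_splitBound_le {k : ℕ} (hk : 3 ≤ k) (a m : ℕ) :
    ((m : ℝ≥0∞) + 1) ^ (k + 1) * splitBound k a m ≤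
      2 ^ k * decay k a * (if 2 * m ≤ a then (m : ℝ≥0∞) + 1 else 0) +
        2 ^ (k - 3) * decay (k - 3) a * (if a / 2 ≤ m then decay 2 m else 0) := by
  obtain ⟨j, rfl⟩ : ∃ j, k = j + 3 := ⟨k - 3, by omega⟩
  rw [Nat.add_sub_cancel]
  unfold splitBound
  by_cases hm : 2 * m ≤ a
  · have hnear : ((m : ℝ≥0∞) + 1) ^ (j + 3 + 1) * decay (j + 3) m = m + 1 := by
      rw [pow_succ', mul_assoc, pow_mul_decay, mul_one]
    rw [if_pos hm, if_pos hm, mul_left_comm, hnear]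
    exact le_self_add
  · rw [if_neg hm, if_neg hm, if_pos (by omega), show 2 * (j + 3) = (j + 3 + 1) + (j + 2) by ring,
      pow_mul_decay_add, decay_add, mul_zero, zero_add]
    gcongr
    exact decay_le_two_pow_mul (by omega) j

theorem tsum_pow_mul_splitBound_le {k : ℕ} (hk : 3 ≤ k) (a : ℕ) :
    ∑' m : ℕ, ((m : ℝ≥0∞) + 1) ^ (k + 1) * splitBound k a m ≤
      2 ^ (k + 1) * decay (k - 2) a := by
  have hhalf : decay 1 (a / 2) ≤ 2 * decay 1 a := by
    simpa using decay_le_two_pow_mul (by omega : a ≤ 2 * (a / 2) + 1) 1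
  obtain ⟨j, rfl⟩ : ∃ j, k = j + 3 := ⟨k - 3, by omega⟩
  calc ∑' m : ℕ, ((m : ℝ≥0∞) + 1) ^ (j + 3 + 1) * splitBound (j + 3) a m
      ≤ 2 ^ (j + 3) * decay (j + 3) a * ∑' m : ℕ, (if 2 * m ≤ a then (m : ℝ≥0∞) + 1 else 0) +
          2 ^ j * decay j a * ∑' m : ℕ, (if a / 2 ≤ m then decay 2 m else 0) := by
        rw [← ENNReal.tsum_mul_left, ← ENNReal.tsum_mul_left, ← ENNReal.tsum_add]
        exact ENNReal.tsum_le_tsum (pow_mul_splitBound_le hk a)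
    _ ≤ 2 ^ (j + 3) * decay (j + 3) a * ((a : ℝ≥0∞) + 1) ^ 2 +
          2 ^ j * decay j a * (2 * (2 * decay 1 a)) := by
        gcongr
        · exact tsum_ite_two_mul_le_le_sq a
        · exact (tsum_decay_two_tail_le (a / 2)).trans (by gcongr)
    _ = 2 ^ (j + 3) * (((a : ℝ≥0∞) + 1) ^ 2 * decay (2 + (j + 1)) a) +
          2 ^ (j + 2) * (decay j a * decay 1 a) := by
        rw [show 2 + (j + 1) = j + 3 by ring]
        ring
    _ = (2 ^ (j + 3) + 2 ^ (j + 2)) * decay (j + 1) a := by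
        rw [pow_mul_decay_add, ← decay_add]
        ring
    _ ≤ 2 ^ (j + 3 + 1) * decay (j + 3 - 2) a := by
        rw [show j + 3 - 2 = j + 1 by omega]
        gcongr
        calc (2 : ℝ≥0∞) ^ (j + 3) + 2 ^ (j + 2) ≤ 2 ^ (j + 3) + 2 ^ (j + 3) := by
              gcongr <;> norm_num
          _ = 2 ^ (j + 3 + 1) := by ring

theorem tsum_decay_mul_decay_sub_le (hd : 5 ≤ d) (z : Vtx d) :
    ∑' y : Vtx d, decay (d - 2) (supNorm y) * decay (d - 2) (supNorm (y - z)) ≤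
      d * 4 ^ d * decay (d - 4) (supNorm z) := by
  set G : ℕ → ℝ≥0∞ := splitBound (d - 2) (supNorm z)
  calc ∑' y : Vtx d, decay (d - 2) (supNorm y) * decay (d - 2) (supNorm (y - z))
      ≤ ∑' y : Vtx d, (G (supNorm y) + G (supNorm (y - z))) :=
        ENNReal.tsum_le_tsum fun y =>
          decay_mul_decay_le_splitBound (supNorm_le_add_supNorm_sub z y)
    _ = 2 * ∑' y : Vtx d, G (supNorm y) := by
        rw [ENNReal.tsum_add, two_mul]
        congr 1
        exact (Equiv.subRight z).tsum_eq fun y => G (supNorm y)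
    _ ≤ 2 * (d * 2 ^ d * ∑' m : ℕ, ((m : ℝ≥0∞) + 1) ^ (d - 2 + 1) * G m) := by
        rw [show d - 2 + 1 = d - 1 by omega]
        gcongr
        exact tsum_comp_supNorm_le (by omega) G
    _ ≤ 2 * (d * 2 ^ d * (2 ^ (d - 2 + 1) * decay (d - 2 - 2) (supNorm z))) := by
        gcongr
        exact tsum_pow_mul_splitBound_le (by omega) _
    _ = d * 4 ^ d * decay (d - 4) (supNorm z) := by
        have h2 : (2 : ℝ≥0∞) * 2 ^ (d - 2 + 1) = 2 ^ d := by
          rw [← pow_succ']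
          congr 1
          omega
        rw [show d - 2 - 2 = d - 4 by omega, show (4 : ℝ≥0∞) = 2 * 2 by norm_num, mul_pow, ← h2]
        ring

theorem mul_mul_le_of_le_or_le {a b t e : ℝ≥0∞} (h : a ≤ e ∨ b ≤ e) :
    a * t * b ≤ e * (t * b + a * t) := by
  rcases h with h | h
  · calc a * t * b ≤ e * (t * b) := by rw [mul_assoc]; gcongr
      _ ≤ _ := by gcongr; exact le_self_add
  · calc a * t * b ≤ e * (a * t) := by rw [mul_comm]; gcongr
      _ ≤ _ := by gcongr; exact le_add_self

section Comparable

variable {T : Vtx d → ℝ≥0∞} {A B : ℝ≥0∞}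

theorem tsum_mul_sub_le (hd : 5 ≤ d) (hT : ∀ v, T v ≤ A * decay (d - 2) (supNorm v))
    (u v : Vtx d) :
    ∑' y, T (y - u) * T (y - v) ≤ A ^ 2 * (d * 4 ^ d) * decay (d - 4) (supNorm (u - v)) := by
  calc ∑' y, T (y - u) * T (y - v) = ∑' y, T y * T (y - (v - u)) := by
        rw [← (Equiv.subRight u).tsum_eq fun y => T y * T (y - (v - u))]
        simp only [Equiv.subRight_apply, sub_sub_sub_cancel_right]
    _ ≤ ∑' y, A ^ 2 * (decay (d - 2) (supNorm y) * decay (d - 2) (supNorm (y - (v - u)))) :=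
        ENNReal.tsum_le_tsum fun y => (mul_le_mul' (hT _) (hT _)).trans_eq (by ring)
    _ ≤ _ := by
        rw [ENNReal.tsum_mul_left, mul_assoc, supNorm_sub_comm u v]
        gcongr
        exact tsum_decay_mul_decay_sub_le hd (v - u)

theorem tsum_mul_mul_le (hd : 5 ≤ d) (hup : ∀ v, T v ≤ A * decay (d - 2) (supNorm v))
    (hlow : ∀ v, decay (d - 2) (supNorm v) ≤ B * T v) (x x' : Vtx d) :
    ∑' y, T y * T (y - x) * T (y - x') ≤
      2 * (A * 2 ^ (d - 2) * B) * (A ^ 2 * (d * 4 ^ d)) * T x' *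
        decay (d - 4) (min (supNorm x) (supNorm (x - x'))) := by
  set δ := decay (d - 4) (min (supNorm x) (supNorm (x - x')))
  have hclose (v : Vtx d)
      (hv : decay (d - 2) (supNorm v) ≤ 2 ^ (d - 2) * decay (d - 2) (supNorm x')) :
      T v ≤ A * 2 ^ (d - 2) * B * T x' :=
    calc T v ≤ A * (2 ^ (d - 2) * (B * T x')) :=
          (hup v).trans (by gcongr; exact hv.trans (by gcongr; exact hlow x'))
      _ = _ := by ring
  have hpoint (y : Vtx d) : T y * T (y - x) * T (y - x') ≤
      A * 2 ^ (d - 2) * B * T x' * (T (y - x) * T (y - x') + T (y - 0) * T (y - x)) := by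
    rw [sub_zero]
    exact mul_mul_le_of_le_or_le <|
      (decay_le_or_decay_le_of_le_add (supNorm_le_add_supNorm_sub x' y) _).imp
        (hclose _) (hclose _)
  calc ∑' y, T y * T (y - x) * T (y - x')
      ≤ A * 2 ^ (d - 2) * B * T x' *
          (∑' y, T (y - x) * T (y - x') + ∑' y, T (y - 0) * T (y - x)) := by
        rw [← ENNReal.tsum_add, ← ENNReal.tsum_mul_left]
        exact ENNReal.tsum_le_tsum hpoint
    _ ≤ A * 2 ^ (d - 2) * B * T x' * (A ^ 2 * (d * 4 ^ d) * δ + A ^ 2 * (d * 4 ^ d) * δ) := by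
        gcongr
        · exact (tsum_mul_sub_le hd hup x x').trans
            (by gcongr; exact decay_antitone (min_le_right _ _) _)
        · refine (tsum_mul_sub_le hd hup 0 x).trans ?_
          rw [zero_sub, supNorm_neg]
          gcongr
          exact decay_antitone (min_le_left _ _) _
    _ = _ := by ring

end Comparable

section Profile

variable {τ : Vtx d → ℝ}

theorem le_max_one_mul_rpow {C₀ e : ℝ} (hτ0 : τ 0 = 1)
    (hup : ∀ x, x ≠ 0 → τ x ≤ C₀ * (1 + znorm x) ^ e) (v : Vtx d) :
    τ v ≤ max C₀ 1 * (1 + znorm v) ^ e := by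
  by_cases hv : v = 0
  · simp [hv, hτ0, znorm]
  · have := znorm_nonneg v
    exact (hup v hv).trans (by gcongr; exact le_max_left _ _)

theorem min_one_mul_rpow_le {c e : ℝ} (hτ0 : τ 0 = 1)
    (hlow : ∀ x, x ≠ 0 → c * (1 + znorm x) ^ e ≤ τ x) (v : Vtx d) :
    min c 1 * (1 + znorm v) ^ e ≤ τ v := by
  by_cases hv : v = 0
  · simp [hv, hτ0, znorm]
  · refine le_trans ?_ (hlow v hv)
    have := znorm_nonneg v
    gcongr
    exact min_le_left _ _

theorem ofReal_le_mul_decay {C₀ : ℝ} (hd : 2 ≤ d) (hτ0 : τ 0 = 1)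
    (hup : ∀ x, x ≠ 0 → τ x ≤ C₀ * (1 + znorm x) ^ (2 - (d : ℝ))) (v : Vtx d) :
    ENNReal.ofReal (τ v) ≤ ENNReal.ofReal (max C₀ 1) * decay (d - 2) (supNorm v) := by
  have he : 2 - (d : ℝ) = -((d - 2 : ℕ) : ℝ) := by push_cast [Nat.cast_sub hd]; ring
  calc ENNReal.ofReal (τ v) ≤ ENNReal.ofReal (max C₀ 1 * (1 + znorm v) ^ (2 - (d : ℝ))) :=
        ENNReal.ofReal_le_ofReal (le_max_one_mul_rpow hτ0 hup v)
    _ ≤ _ := by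
        rw [ENNReal.ofReal_mul (le_max_of_le_right zero_le_one), he]
        gcongr
        exact ofReal_rpow_neg_le_decay (by linarith [supNorm_le_znorm v])

theorem decay_le_mul_ofReal {c : ℝ} (hd : 2 ≤ d) (hc : 0 < c) (hτ0 : τ 0 = 1)
    (hlow : ∀ x, x ≠ 0 → c * (1 + znorm x) ^ (2 - (d : ℝ)) ≤ τ x) (v : Vtx d) :
    decay (d - 2) (supNorm v) ≤
      ENNReal.ofReal (√d ^ (d - 2) / min c 1) * ENNReal.ofReal (τ v) := by
  have he : 2 - (d : ℝ) = -((d - 2 : ℕ) : ℝ) := by push_cast [Nat.cast_sub hd]; ring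
  have hmin : 0 < min c 1 := lt_min hc one_pos
  have hz := znorm_nonneg v
  calc decay (d - 2) (supNorm v)
      ≤ ENNReal.ofReal (√d ^ (d - 2)) * ENNReal.ofReal ((1 + znorm v) ^ (2 - (d : ℝ))) := by
        rw [he]
        exact decay_le_ofReal_mul_rpow_neg (by positivity) (by positivity)
          (one_add_znorm_le (by omega) v)
    _ ≤ ENNReal.ofReal (√d ^ (d - 2)) * ENNReal.ofReal (τ v / min c 1) := by
        gcongr
        rw [le_div_iff₀ hmin, mul_comm]
        exact min_one_mul_rpow_le hτ0 hlow v
    _ = _ := by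
        rw [← ENNReal.ofReal_mul (by positivity), ← ENNReal.ofReal_mul (by positivity)]
        ring_nf

noncomputable def triangleConst (d : ℕ) (c C₀ : ℝ) : ℝ≥0∞ :=
  2 * (ENNReal.ofReal (max C₀ 1) * 2 ^ (d - 2) * ENNReal.ofReal (√d ^ (d - 2) / min c 1)) *
    (ENNReal.ofReal (max C₀ 1) ^ 2 * (d * 4 ^ d)) * ENNReal.ofReal (√d ^ (d - 4))

theorem triangleConst_ne_top (d : ℕ) (c C₀ : ℝ) : triangleConst d c C₀ ≠ ⊤ := by
  simp [triangleConst, ENNReal.mul_eq_top]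

theorem triangleConst_pos {c : ℝ} (hd : 0 < d) (hc : 0 < c) (C₀ : ℝ) :
    0 < triangleConst d c C₀ := by
  have : 0 < max C₀ 1 := lt_max_of_lt_right one_pos
  have : 0 < min c 1 := lt_min hc one_pos
  have : 0 < √(d : ℝ) := by positivity
  unfold triangleConst
  positivity

theorem tsum_ofReal_mul_le {c C₀ : ℝ} (hd : 5 ≤ d) (hc : 0 < c) (hτ : ∀ x, 0 ≤ τ x)
    (hτ0 : τ 0 = 1)
    (hbound : ∀ x : Vtx d, x ≠ 0 →
      c * (1 + znorm x) ^ (2 - (d : ℝ)) ≤ τ x ∧ τ x ≤ C₀ * (1 + znorm x) ^ (2 - (d : ℝ)))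
    (x x' : Vtx d) :
    ∑' y, ENNReal.ofReal (τ x * τ y * τ (y - x) * τ (y - x')) ≤
      triangleConst d c C₀ * ENNReal.ofReal (τ x) * ENNReal.ofReal (τ x') *
        ENNReal.ofReal ((1 + min (znorm x) (znorm (x - x'))) ^ (-((d : ℝ) - 4))) := by
  set T := fun v => ENNReal.ofReal (τ v)
  have hexp : -((d : ℝ) - 4) = -((d - 4 : ℕ) : ℝ) := by
    push_cast [Nat.cast_sub (by omega : 4 ≤ d)]
    ring
  calc ∑' y, ENNReal.ofReal (τ x * τ y * τ (y - x) * τ (y - x'))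
      = T x * ∑' y, T y * T (y - x) * T (y - x') := by
        rw [← ENNReal.tsum_mul_left]
        refine tsum_congr fun y => ?_
        simp only [T, ENNReal.ofReal_mul, hτ, mul_assoc]
    _ ≤ T x * (2 * (ENNReal.ofReal (max C₀ 1) * 2 ^ (d - 2) *
          ENNReal.ofReal (√d ^ (d - 2) / min c 1)) * (ENNReal.ofReal (max C₀ 1) ^ 2 * (d * 4 ^ d)) *
          T x' * decay (d - 4) (min (supNorm x) (supNorm (x - x')))) := by
        gcongr
        exact tsum_mul_mul_le hd
          (ofReal_le_mul_decay (by omega) hτ0 fun v hv => (hbound v hv).2)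
          (decay_le_mul_ofReal (by omega) hc hτ0 fun v hv => (hbound v hv).1) x x'
    _ ≤ _ := by
        rw [hexp, triangleConst]
        grw [decay_min_le (by omega) (d - 4) x (x - x')]
        exact le_of_eq (by ring)

end Profile

end WeightedTriangle

open WeightedTriangle

theorem weighted_triangle_bound_general
    (d : ℕ) (hd : 6 < d) (c C₀ : ℝ) (hc : 0 < c) :
    ∃ C : ℝ, 0 < C ∧
      ∀ τ : Vtx d → ℝ,
        (∀ x, 0 ≤ τ x ∧ τ x ≤ 1) →
        τ 0 = 1 →
        (∀ x, τ (-x) = τ x) →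
        (∀ x : Vtx d, x ≠ 0 →
          c * (1 + znorm x) ^ (2 - (d : ℝ)) ≤ τ x ∧
          τ x ≤ C₀ * (1 + znorm x) ^ (2 - (d : ℝ))) →
        ∀ x x' : Vtx d,
          (∑' y : Vtx d, ENNReal.ofReal (τ x * τ y * τ (y - x) * τ (y - x'))) ≤
            ENNReal.ofReal
              (C * τ x * τ x' *
                (1 + min (znorm x) (znorm (x - x'))) ^ (-((d : ℝ) - 4))) := by
  refine ⟨(triangleConst d c C₀).toReal,
    ENNReal.toReal_pos (triangleConst_pos (by omega) hc C₀).ne' (triangleConst_ne_top d c C₀),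
    fun τ hτ hτ0 _ hbound x x' => ?_⟩
  have := (hτ x).1
  have := (hτ x').1
  rw [ENNReal.ofReal_mul (by positivity), ENNReal.ofReal_mul (by positivity),
    ENNReal.ofReal_mul (by positivity), ENNReal.ofReal_toReal (triangleConst_ne_top d c C₀)]
  exact tsum_ofReal_mul_le (by omega) hc (fun v => (hτ v).1) hτ0 hbound x x'

/-- **Weighted triangle bound** (Lemma 4.14).
If `d > 6` and `τ : ℤ^d → [0,1]` satisfies `τ(0) = 1`, `τ(−x) = τ(x)` and
two-sided bounds `c(1+|x|)^{2−d} ≤ τ(x) ≤ C₀(1+|x|)^{2−d}` for `x ≠ 0`, then there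
is a constant `C = C(d, c, C₀)` with
`∑_y τ(x) τ(y) τ(y−x) τ(y−x') ≤ C τ(x) τ(x') (1 + min(|x|, |x−x'|))^{−(d−4)}`. -/
theorem weighted_triangle_bound
    (d : ℕ) (hd : 6 < d) (c C₀ : ℝ) (hc : 0 < c) (hcC : c ≤ C₀) :
    ∃ C : ℝ, 0 < C ∧
      ∀ τ : Vtx d → ℝ,
        (∀ x, 0 ≤ τ x ∧ τ x ≤ 1) →
        τ 0 = 1 →
        (∀ x, τ (-x) = τ x) →
        (∀ x : Vtx d, x ≠ 0 →
          c * (1 + znorm x) ^ (2 - (d : ℝ)) ≤ τ x ∧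
          τ x ≤ C₀ * (1 + znorm x) ^ (2 - (d : ℝ))) →
        ∀ x x' : Vtx d,
          (∑' y : Vtx d, ENNReal.ofReal (τ x * τ y * τ (y - x) * τ (y - x'))) ≤
            ENNReal.ofReal
              (C * τ x * τ x' *
                (1 + min (znorm x) (znorm (x - x'))) ^ (-((d : ℝ) - 4))) :=
  weighted_triangle_bound_general d hd c C₀ hc
end
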